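/- arXiv:math/0511245 — 5 statements merged into one kernel-verified Lean document; each statement's English description precedes it below -/
import Mathlib

section
/- Let T be an integer-valued polynomial of degree at most Δ, and let α be an integer. Write T(x) = T(-α) + (x+α)·Q(x) for a polynomial Q of degree at most Δ-1. Then D_Δ · Q is an integer-valued polynomial, where D_Δ = lcm(1,2,...,Δ). -/
/-!
`Q` has degree `< Δ`, and at the `Δ` consecutive integers `-α + j`, `1 ≤ j ≤ Δ`, the value
`D_Δ · Q(-α + j) = (D_Δ / j) · (T(-α + j) - T(-α))` is an integer. A polynomial of degree `< d`
that is integral at `d` consecutive integers is integral at every integer: its `d`-th forward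
difference vanishes, and each forward difference is recovered from the next one by summing
along `ℤ` from an integral starting value.
-/

/-- `D_Δ = lcm(1,2,...,Δ)`. -/
def Dlcm (Δ : ℕ) : ℕ := (Finset.Icc 1 Δ).lcm id

open Polynomial fwdDiff

theorem fwdDiff_iter_comp_addMonoidHom {M M' G : Type*} [AddCommMonoid M] [AddCommMonoid M']
    [AddCommGroup G] (φ : M →+ M') (f : M' → G) (h : M) (n : ℕ) (y : M) :
    Δ_[h] ^[n] (f ∘ φ) y = Δ_[φ h] ^[n] f (φ y) := by
  simp [fwdDiff_iter_eq_sum_shift, map_nsmul]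

theorem Polynomial.fwdDiff_iter_eval_intCast_eq_zero_of_degree_lt {R : Type*} [CommRing R]
    {P : R[X]} {n : ℕ} (hP : P.degree < n) : Δ_[1] ^[n] (fun k : ℤ ↦ P.eval (k : R)) = 0 := by
  funext k
  rcases eq_or_ne P 0 with rfl | hP0
  · simp [fwdDiff_iter_eq_sum_shift]
  have hcast := fwdDiff_iter_comp_addMonoidHom (Int.castAddHom R) P.eval 1 n k
  simp only [Function.comp_def, Int.coe_castAddHom, Int.cast_one] at hcast
  rw [hcast, fwdDiff_iter_eq_zero_of_degree_lt ((natDegree_lt_iff_degree_lt hP0).mpr hP)]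
  rfl

theorem AddSubgroup.mem_of_fwdDiff_iter_eq_zero {G : Type*} [AddCommGroup G] (S : AddSubgroup G)
    {d : ℕ} {f : ℤ → G} (hf : Δ_[1] ^[d] f = 0) {a : ℤ} (ha : ∀ i < d, f (a + i) ∈ S) (n : ℤ) :
    f n ∈ S := by
  induction d generalizing f n with
  | zero => simp [show f = 0 from hf]
  | succ d ih =>
    have hdiff : ∀ k, Δ_[1] f k ∈ S := ih hf fun i hi ↦ by
      simpa [fwdDiff, add_assoc] using sub_mem (ha (i + 1) (by omega)) (ha i (by omega))
    induction n using Int.inductionOn' (b := a) with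
    | zero => simpa using ha 0 (by omega)
    | succ k _ hk => simpa [fwdDiff] using add_mem hk (hdiff k)
    | pred k _ hk => simpa [fwdDiff] using sub_mem hk (hdiff (k - 1))

theorem Dlcm_mul_quotient_integer_valued_general
    (Δ : ℕ) (T Q : Polynomial ℚ) (α : ℤ)
    (hT : ∀ n : ℤ, ∃ z : ℤ, T.eval (n : ℚ) = z)
    (hdeg : T.natDegree ≤ Δ)
    (hQ : T = Polynomial.C (T.eval ((-α : ℤ) : ℚ)) +
      (Polynomial.X + Polynomial.C ((α : ℚ))) * Q) :
    ∀ n : ℤ, ∃ z : ℤ, (Dlcm Δ : ℚ) * Q.eval (n : ℚ) = z := by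
  have hfactor : (X + C (α : ℚ)) * Q = T - C (T.eval ((-α : ℤ) : ℚ)) := by
    rw [eq_sub_iff_add_eq', ← hQ]
  have hQdeg : Q.degree < Δ := by
    rcases eq_or_ne Q 0 with rfl | hQ0
    · simp
    have := natDegree_mul (X_add_C_ne_zero (α : ℚ)) hQ0
    rw [hfactor, natDegree_sub_C, natDegree_X_add_C] at this
    exact (natDegree_lt_iff_degree_lt hQ0).mp (by omega)
  have hnodes : ∀ j ∈ Finset.Icc 1 Δ,
      (Dlcm Δ : ℚ) * Q.eval ((-α + j : ℤ) : ℚ) ∈ (Int.castAddHom ℚ).range := by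
    intro j hj
    obtain ⟨e, he⟩ : j ∣ Dlcm Δ := Finset.dvd_lcm hj
    obtain ⟨a, ha⟩ := hT (-α + j)
    obtain ⟨b, hb⟩ := hT (-α)
    have hval := congrArg (eval ((-α + j : ℤ) : ℚ)) hfactor
    simp only [eval_mul, eval_add, eval_X, eval_C, eval_sub, ha, hb] at hval
    refine ⟨e * (a - b), ?_⟩
    rw [Int.coe_castAddHom, he]
    push_cast at hval ⊢
    linear_combination (-e : ℚ) * hval
  have hDQdeg : ((Dlcm Δ : ℚ) • Q).degree < Δ := (degree_smul_le _ Q).trans_lt hQdeg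
  intro n
  obtain ⟨z, hz⟩ := (Int.castAddHom ℚ).range.mem_of_fwdDiff_iter_eq_zero
    (fwdDiff_iter_eval_intCast_eq_zero_of_degree_lt hDQdeg) (a := -α + 1) (fun i hi ↦ by
      simpa [add_assoc, add_comm (1 : ℚ)] using
        hnodes (i + 1) (Finset.mem_Icc.mpr ⟨by omega, by omega⟩)) n
  exact ⟨z, by simpa using hz.symm⟩

/-- If `T` is integer-valued of degree at most `Δ ≥ 1`, `α ∈ ℤ`, and
`T(x) = T(-α) + (x+α)·Q(x)`, then `D_Δ · Q` is integer-valued. -/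
theorem Dlcm_mul_quotient_integer_valued
    (Δ : ℕ) (hΔ : 1 ≤ Δ) (T Q : Polynomial ℚ) (α : ℤ)
    (hT : ∀ n : ℤ, ∃ z : ℤ, T.eval (n : ℚ) = z)
    (hdeg : T.natDegree ≤ Δ)
    (hQ : T = Polynomial.C (T.eval ((-α : ℤ) : ℚ)) +
      (Polynomial.X + Polynomial.C ((α : ℚ))) * Q) :
    ∀ n : ℤ, ∃ z : ℤ, (Dlcm Δ : ℚ) * Q.eval (n : ℚ) = z :=
  Dlcm_mul_quotient_integer_valued_general Δ T Q α hT hdeg hQ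
end

section
/- For all real numbers (or elements of a commutative ring) x, y and every natural number n, the identity ∏_{i=1}^{n}(x-y+i) = Σ_{k=0}^{n} (-1)^k C(n,k) ∏_{i=k+1}^{n}(x+i) · ∏_{i=0}^{k-1}(y+i) holds. -/
open Finset

/-- Falling-factorial Chu–Vandermonde in product form. -/
lemma prod_vandermonde {R : Type*} [CommRing R] (c d : R) (n : ℕ) :
    (∏ i ∈ range n, (c + d - (i : R))) =
      ∑ k ∈ range (n + 1), (n.choose k : R) *
        (∏ i ∈ range k, (c - (i : R))) * (∏ i ∈ range (n - k), (d - (i : R))) := by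
  induction n with
  | zero => simp
  | succ n ih =>
    rw [prod_range_succ, ih, Finset.sum_mul]
    have key : ∀ k ∈ range (n + 1),
        (n.choose k : R) * (∏ i ∈ range k, (c - (i : R))) *
          (∏ i ∈ range (n - k), (d - (i : R))) * (c + d - (n : R)) =
        (n.choose k : R) * (∏ i ∈ range (k+1), (c - (i : R))) *
          (∏ i ∈ range (n - k), (d - (i : R))) +
        (n.choose k : R) * (∏ i ∈ range k, (c - (i : R))) *
          (∏ i ∈ range (n - k + 1), (d - (i : R))) := by
      intro k hk
      have hk' : k ≤ n := Nat.lt_succ_iff.mp (mem_range.mp hk)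
      have hcast : ((n - k : ℕ) : R) = (n : R) - (k : R) := by
        push_cast [hk']; ring
      rw [prod_range_succ, prod_range_succ, hcast]
      ring
    rw [Finset.sum_congr rfl key, Finset.sum_add_distrib]
    have hB : ∑ k ∈ range (n+1), (n.choose k : R) *
        (∏ i ∈ range k, (c - (i : R))) * (∏ i ∈ range (n - k + 1), (d - (i : R))) =
        ∑ k ∈ range (n+1), (n.choose (k+1) : R) *
        (∏ i ∈ range (k+1), (c - (i : R))) * (∏ i ∈ range (n - k), (d - (i : R))) +
        ∏ i ∈ range (n+1), (d - (i : R)) := by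
      rw [Finset.sum_range_succ' (fun k => (n.choose k : R) *
        (∏ i ∈ range k, (c - (i : R))) * (∏ i ∈ range (n - k + 1), (d - (i : R)))) n]
      rw [Finset.sum_range_succ (fun k => (n.choose (k+1) : R) *
        (∏ i ∈ range (k+1), (c - (i : R))) * (∏ i ∈ range (n - k), (d - (i : R)))) n]
      simp only [Nat.choose_succ_self, Nat.cast_zero, zero_mul, add_zero,
        Nat.choose_zero_right, Nat.cast_one, one_mul, prod_range_zero, Nat.sub_zero]
      congr 1
      apply Finset.sum_congr rfl
      intro k hk
      have hk' := mem_range.mp hk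
      have : n - (k+1) + 1 = n - k := by omega
      rw [this]
    rw [hB]
    -- now expand the target side
    rw [Finset.sum_range_succ' (fun k => (((n+1).choose k : ℕ) : R) *
        (∏ i ∈ range k, (c - (i : R))) * (∏ i ∈ range (n + 1 - k), (d - (i : R)))) (n+1)]
    simp only [Nat.choose_succ_succ', Nat.cast_add, Nat.succ_sub_succ_eq_sub,
      Nat.choose_zero_right, Nat.cast_one, one_mul, prod_range_zero, Nat.sub_zero]
    rw [← add_assoc, ← Finset.sum_add_distrib]
    congr 1
    apply Finset.sum_congr rfl
    intro k hk
    ring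

/-- Vasiliev's combinatorial identity: in any commutative ring,
`∏_{i=1}^{n}(x-y+i) = Σ_{k=0}^{n} (-1)^k C(n,k) ∏_{i=k+1}^{n}(x+i) ∏_{i=0}^{k-1}(y+i)`. -/
theorem vasiliev_identity {R : Type*} [CommRing R] (x y : R) (n : ℕ) :
    (∏ i ∈ Finset.Icc 1 n, (x - y + (i : R))) =
      ∑ k ∈ Finset.range (n + 1), (-1 : R) ^ k * (n.choose k : R) *
        (∏ i ∈ Finset.Icc (k + 1) n, (x + (i : R))) *
        (∏ i ∈ Finset.range k, (y + (i : R))) := by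
  have V := prod_vandermonde (-y) (x + (n : R)) n
  have L : (∏ i ∈ Finset.Icc 1 n, (x - y + (i : R))) =
      ∏ i ∈ range n, ((-y) + (x + (n : R)) - (i : R)) := by
    rw [← Finset.Ico_add_one_right_eq_Icc, prod_Ico_eq_prod_range]
    rw [← Finset.prod_range_reflect (fun i => ((-y) + (x + (n : R)) - (i : R))) n]
    apply Finset.prod_congr rfl
    intro i hi
    have hi' := mem_range.mp hi
    have h1 : n - 1 - i = n - (i + 1) := by omega
    rw [h1, Nat.cast_sub (by omega : i + 1 ≤ n)]
    push_cast
    ring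
  rw [L, V]
  apply Finset.sum_congr rfl
  intro k hk
  have hk' : k ≤ n := Nat.lt_succ_iff.mp (mem_range.mp hk)
  have hy : (∏ i ∈ range k, ((-y) - (i : R))) = (-1 : R) ^ k * ∏ i ∈ range k, (y + (i : R)) := by
    calc ∏ i ∈ range k, ((-y) - (i : R)) = ∏ i ∈ range k, ((-1) * (y + (i : R))) :=
          Finset.prod_congr rfl (fun i _ => by ring)
      _ = (-1 : R) ^ k * ∏ i ∈ range k, (y + (i : R)) := by
          rw [Finset.prod_mul_distrib, Finset.prod_const, Finset.card_range]
  have hx : (∏ i ∈ range (n - k), (x + (n : R) - (i : R))) =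
      ∏ i ∈ Finset.Icc (k + 1) n, (x + (i : R)) := by
    rw [← Finset.Ico_add_one_right_eq_Icc, prod_Ico_eq_prod_range]
    rw [show n + 1 - (k + 1) = n - k from by omega]
    rw [← Finset.prod_range_reflect (fun i => (x + (n : R) - (i : R))) (n - k)]
    apply Finset.prod_congr rfl
    intro i hi
    have hi' := mem_range.mp hi
    have h1 : k + 1 + i = n - (n - k - 1 - i) := by omega
    rw [h1, Nat.cast_sub (by omega : n - k - 1 - i ≤ n)]
    ring
  rw [hy, hx]
  ring
end

section
/- Let Δ ≥ 0 be an integer and D_Δ = lcm(1,...,Δ). If R(x) = A/(x+α)^m with α ∈ ℤ, m ≥ 1, M ≥ m, and D_Δ^{M-m}·A ∈ ℤ, and T is an integer-valued polynomial of degree at most Δ, then R(x)·T(x) can be written as Σ_{k=1}^{m} B_k/(x+α)^k + S(x) where D_Δ^{M-k}·B_k ∈ ℤ for each k and D_Δ^{M}·S is an integer-valued polynomial. -/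
open Polynomial Finset

def IsIntegerValued (f : ℚ → ℚ) : Prop := ∀ n : ℤ, f n ∈ (⊥ : Subring ℚ)

lemma dvd_Dlcm {n Δ : ℕ} (h1 : 1 ≤ n) (h2 : n ≤ Δ) : n ∣ Dlcm Δ :=
  Finset.dvd_lcm (Finset.mem_Icc.mpr ⟨h1, h2⟩)

lemma isIntegerValued_of_fwdDiff_iter_eq_zero {n : ℕ} {f : ℚ → ℚ} (hf : (fwdDiff 1)^[n] f = 0)
    (a : ℤ) (ha : ∀ i < n, f (a + i) ∈ (⊥ : Subring ℚ)) : IsIntegerValued f := by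
  induction n generalizing f with
  | zero => intro t; simp [show f = 0 from hf]
  | succ n ih =>
    have hdiff : IsIntegerValued (fwdDiff 1 f) := by
      refine ih hf fun i hi => ?_
      have h := sub_mem (ha (i + 1) (by omega)) (ha i (by omega))
      simpa [fwdDiff, add_assoc] using h
    intro t
    induction t using Int.inductionOn' (b := a) with
    | zero => simpa using ha 0 (by omega)
    | succ k _ hk => simpa [fwdDiff] using add_mem hk (hdiff k)
    | pred k _ hk => simpa [fwdDiff] using sub_mem hk (hdiff (k - 1))

lemma isIntegerValued_Dlcm_mul_divX {Δ : ℕ} {R : ℚ[X]} (hdeg : R.natDegree ≤ Δ)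
    (hR : IsIntegerValued R.eval) : IsIntegerValued (C (Dlcm Δ : ℚ) * R.divX).eval := by
  rcases Nat.eq_zero_or_pos Δ with rfl | hΔ
  · rw [eq_C_of_natDegree_eq_zero (Nat.le_zero.mp hdeg), divX_C]
    intro t; simp
  refine isIntegerValued_of_fwdDiff_iter_eq_zero (n := Δ) (fwdDiff_iter_eq_zero_of_degree_lt ?_) 1
    fun i hi => ?_
  · calc (C (Dlcm Δ : ℚ) * R.divX).natDegree ≤ R.divX.natDegree := natDegree_C_mul_le _ _
      _ = R.natDegree - 1 := natDegree_divX_eq_natDegree_tsub_one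
      _ < Δ := by omega
  · obtain ⟨e, he⟩ := dvd_Dlcm (n := 1 + i) (Δ := Δ) (by omega) (by omega)
    have hsplit := congrArg (eval ((1 + i : ℕ) : ℚ)) (divX_mul_X_add R)
    rw [eval_add, eval_mul, eval_X, eval_C, coeff_zero_eq_eval_zero] at hsplit
    have key : (C (Dlcm Δ : ℚ) * R.divX).eval ((1 + i : ℕ) : ℚ)
        = e * (R.eval ((1 + i : ℕ) : ℚ) - R.eval 0) := by
      rw [eval_mul, eval_C, he, ← hsplit]; push_cast; ring
    push_cast at key ⊢
    rw [key]
    exact mul_mem (intCast_mem _ e)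
      (sub_mem (by exact_mod_cast hR (1 + i)) (by exact_mod_cast hR 0))

lemma isIntegerValued_Dlcm_pow_mul_iterate_divX {Δ : ℕ} (j : ℕ) {R : ℚ[X]}
    (hdeg : R.natDegree ≤ Δ) (hR : IsIntegerValued R.eval) :
    IsIntegerValued (C ((Dlcm Δ : ℚ) ^ j) * divX^[j] R).eval := by
  induction j generalizing R with
  | zero => simpa using hR
  | succ j ih =>
    have hdeg' : (C (Dlcm Δ : ℚ) * R.divX).natDegree ≤ Δ :=
      (natDegree_C_mul_le _ _).trans (natDegree_divX_le.trans hdeg)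
    have hcomm : Function.Commute divX (C (Dlcm Δ : ℚ) * ·) := fun _ => divX_C_mul
    have := ih hdeg' (isIntegerValued_Dlcm_mul_divX hdeg hR)
    rwa [hcomm.iterate_left j, ← mul_assoc, ← C_mul, ← pow_succ,
      ← Function.iterate_succ_apply] at this

lemma coeff_iterate_divX {R : Type*} [Semiring R] (p : R[X]) (j n : ℕ) :
    (divX^[j] p).coeff n = p.coeff (n + j) := by
  induction j generalizing p with
  | zero => rfl
  | succ j ih => rw [Function.iterate_succ_apply, ih, coeff_divX, add_assoc]

lemma eval_eq_sum_add_pow_mul_iterate_divX {R : Type*} [CommSemiring R] (p : R[X]) (m : ℕ)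
    (y : R) :
    p.eval y = ∑ j ∈ range m, p.coeff j * y ^ j + y ^ m * (divX^[m] p).eval y := by
  induction m with
  | zero => simp
  | succ m ih =>
    have h := congrArg (eval y) (divX_mul_X_add (divX^[m] p))
    rw [eval_add, eval_mul, eval_X, eval_C, coeff_iterate_divX, zero_add] at h
    rw [ih, ← h, sum_range_succ, Function.iterate_succ_apply']
    ring

lemma sum_Icc_div_pow {K : Type*} [Field K] (b : ℕ → K) {u : K} (hu : u ≠ 0) (m : ℕ) :
    ∑ k ∈ Icc 1 m, b (m - k) / u ^ k = (∑ j ∈ range m, b j * u ^ j) / u ^ m := by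
  rw [sum_div]
  refine sum_nbij' (m - ·) (m - ·) (by simp; omega) (by simp; omega) (by simp; omega)
    (by simp; omega) fun k hk => ?_
  rw [pow_sub₀ _ hu (mem_Icc.mp hk).2]
  field_simp

theorem single_pole_normal_mul_general
    (Δ : ℕ) (A : ℚ) (α : ℤ) (m M : ℕ) (hmM : m ≤ M)
    (hA : ∃ z : ℤ, ((Dlcm Δ : ℚ) ^ (M - m)) * A = z)
    (T : Polynomial ℚ) (hT : ∀ n : ℤ, ∃ z : ℤ, T.eval (n : ℚ) = z)
    (hdeg : T.natDegree ≤ Δ) :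
    ∃ (B : ℕ → ℚ) (S : Polynomial ℚ),
      (∀ x : ℚ, x + (α : ℚ) ≠ 0 →
        A / (x + (α : ℚ)) ^ m * T.eval x =
          (∑ k ∈ Finset.Icc 1 m, B k / (x + (α : ℚ)) ^ k) + S.eval x) ∧
      (∀ k ∈ Finset.Icc 1 m, ∃ z : ℤ, ((Dlcm Δ : ℚ) ^ (M - k)) * B k = z) ∧
      (∀ n : ℤ, ∃ z : ℤ, ((Dlcm Δ : ℚ) ^ M) * S.eval (n : ℚ) = z) := by
  set P : ℚ[X] := T.comp (X - C (α : ℚ))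
  have hTP (x : ℚ) : T.eval x = P.eval (x + α) := by simp [P]
  have hP (j : ℕ) : IsIntegerValued (C ((Dlcm Δ : ℚ) ^ j) * divX^[j] P).eval := by
    refine isIntegerValued_Dlcm_pow_mul_iterate_divX j
      (by rwa [natDegree_comp, natDegree_X_sub_C, mul_one])
      fun n => Subring.mem_bot.mpr ?_
    obtain ⟨z, hz⟩ := hT (n - α)
    exact ⟨z, by simp [P, ← hz]⟩
  obtain ⟨a, ha⟩ := hA
  refine ⟨fun k => A * P.coeff (m - k), C A * (divX^[m] P).comp (X + C (α : ℚ)), ?_, ?_, ?_⟩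
  · intro x hx
    rw [hTP, eval_eq_sum_add_pow_mul_iterate_divX P m, sum_Icc_div_pow (A * P.coeff ·) hx]
    simp only [eval_mul, eval_C, eval_comp, eval_add, eval_X, ← mul_sum, mul_assoc]
    field_simp
  · intro k hk
    obtain ⟨z, hz⟩ := Subring.mem_bot.mp (hP (m - k) 0)
    refine ⟨a * z, ?_⟩
    simp only [Int.cast_zero, eval_mul, eval_C, ← coeff_zero_eq_eval_zero, coeff_iterate_divX,
      zero_add] at hz
    rw [show M - k = (M - m) + (m - k) by have := (mem_Icc.mp hk).2; omega, pow_add]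
    push_cast
    rw [hz, ← ha]
    ring
  · intro n
    obtain ⟨z, hz⟩ := Subring.mem_bot.mp (hP m (n + α))
    refine ⟨a * z, ?_⟩
    simp only [eval_mul, eval_C, eval_comp, eval_add, eval_X] at hz ⊢
    rw [show M = (M - m) + m by omega, pow_add]
    push_cast at hz ⊢
    rw [hz, ← ha]
    ring

/-- Multiplying `A/(x+α)^m` (with `D_Δ^{M-m} A ∈ ℤ`) by an integer-valued polynomial
of degree `≤ Δ` yields `Σ_{k=1}^m B_k/(x+α)^k + S(x)` with `D_Δ^{M-k} B_k ∈ ℤ`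
and `D_Δ^M S` integer-valued. -/
theorem single_pole_normal_mul
    (Δ : ℕ) (A : ℚ) (α : ℤ) (m M : ℕ) (hm : 1 ≤ m) (hmM : m ≤ M)
    (hA : ∃ z : ℤ, ((Dlcm Δ : ℚ) ^ (M - m)) * A = z)
    (T : Polynomial ℚ) (hT : ∀ n : ℤ, ∃ z : ℤ, T.eval (n : ℚ) = z)
    (hdeg : T.natDegree ≤ Δ) :
    ∃ (B : ℕ → ℚ) (S : Polynomial ℚ),
      (∀ x : ℚ, x + (α : ℚ) ≠ 0 →
        A / (x + (α : ℚ)) ^ m * T.eval x =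
          (∑ k ∈ Finset.Icc 1 m, B k / (x + (α : ℚ)) ^ k) + S.eval x) ∧
      (∀ k ∈ Finset.Icc 1 m, ∃ z : ℤ, ((Dlcm Δ : ℚ) ^ (M - k)) * B k = z) ∧
      (∀ n : ℤ, ∃ z : ℤ, ((Dlcm Δ : ℚ) ^ M) * S.eval (n : ℚ) = z) :=
  single_pole_normal_mul_general Δ A α m M hmM hA T hT hdeg
end

section
/- For integers c ≥ 1 and 0 ≤ k ≤ c−1, and for variables x, y: (x−y+1)(x−y+2)⋯(x−y+c−1) = Σ_{k=0}^{c−1} (−1)^k C(c−1, k) · (x+k+1)(x+k+2)⋯(x+c−1) · y(y+1)⋯(y+k−1), as an identity of polynomials in two variables over ℚ. -/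
/-!
Writing `n = c - 1`, the left side is the falling factorial of length `n` at `(x + n) + (-y)`.
Expand it by the Chu–Vandermonde identity for falling factorials: the factor of length `k`
at `-y` is `(-1)^k y(y+1)⋯(y+k-1)`, and the factor of length `n - k` at `x + n` is
`(x+k+1)⋯(x+n)`.
-/

open Finset

namespace Polynomial

variable {R : Type*}

theorem ascPochhammer_eval_eq_prod_range [CommSemiring R] (n : ℕ) (r : R) :
    (ascPochhammer R n).eval r = ∏ j ∈ range n, (r + j) := by
  induction n with
  | zero => simp
  | succ n ih => rw [ascPochhammer_succ_eval, ih, prod_range_succ]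

theorem ascPochhammer_eval_add_natCast_add_one [CommSemiring R] (n k : ℕ) (r : R) :
    (ascPochhammer R n).eval (r + k + 1) = ∏ i ∈ Icc (k + 1) (k + n), (r + i) := by
  rw [ascPochhammer_eval_eq_prod_range, ← Ico_add_one_right_eq_Icc, prod_Ico_eq_prod_range,
    show k + n + 1 - (k + 1) = n by omega]
  refine prod_congr rfl fun j _ => ?_
  push_cast
  ring

theorem descPochhammer_eval_neg [Ring R] (n : ℕ) (r : R) :
    (descPochhammer R n).eval (-r) = (-1) ^ n * (ascPochhammer R n).eval r := by
  rw [← neg_neg r, ascPochhammer_eval_neg_eq_descPochhammer, neg_neg, ← mul_assoc, ← pow_add,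
    (Even.add_self n).neg_one_pow, one_mul]

theorem descPochhammer_eval_add [CommRing R] (n : ℕ) (r s : R) :
    (descPochhammer R n).eval (r + s) = ∑ ij ∈ antidiagonal n,
      n.choose ij.1 * ((descPochhammer R ij.1).eval r * (descPochhammer R ij.2).eval s) := by
  have smeval_eq_eval (m : ℕ) (t : R) :
      (descPochhammer ℤ m).smeval t = (descPochhammer R m).eval t := by
    rw [← aeval_eq_smeval, aeval_def, ← eval_map, descPochhammer_map]
  simpa only [smeval_eq_eval] using Ring.descPochhammer_smeval_add n (Commute.all r s)

/-- The rising-factorial form of the identity, over any commutative ring. -/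
theorem ascPochhammer_eval_sub_add_one [CommRing R] (n : ℕ) (x y : R) :
    (ascPochhammer R n).eval (x - y + 1) = ∑ k ∈ range (n + 1),
      (-1) ^ k * n.choose k * (ascPochhammer R (n - k)).eval (x + k + 1) *
        (ascPochhammer R k).eval y := by
  have falling_eq : (descPochhammer R n).eval (-y + (x + n)) =
      (ascPochhammer R n).eval (x - y + 1) := by
    rw [descPochhammer_eval_eq_ascPochhammer]
    congr 1
    ring
  rw [← falling_eq, descPochhammer_eval_add, Nat.sum_antidiagonal_eq_sum_range_succ_mk]
  refine sum_congr rfl fun k hk => ?_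
  have hkn : k ≤ n := Nat.lt_succ_iff.mp (mem_range.mp hk)
  rw [descPochhammer_eval_neg, descPochhammer_eval_eq_ascPochhammer, Nat.cast_sub hkn,
    show x + n - (n - k) + 1 = x + k + 1 by ring]
  ring

end Polynomial

/-- For `c ≥ 1`,
`(x−y+1)⋯(x−y+c−1) = Σ_{k=0}^{c−1} (−1)^k C(c−1,k) (x+k+1)⋯(x+c−1) · y(y+1)⋯(y+k−1)`
as polynomials in `x, y` over `ℚ`. -/
theorem vasiliev_identity_c (c : ℕ) (hc : 1 ≤ c) :
    ∀ x y : ℚ,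
      (∏ i ∈ Finset.Icc 1 (c - 1), (x - y + (i : ℚ))) =
        ∑ k ∈ Finset.range c, (-1 : ℚ) ^ k * ((c - 1).choose k : ℚ) *
          (∏ i ∈ Finset.Icc (k + 1) (c - 1), (x + (i : ℚ))) *
          (∏ i ∈ Finset.range k, (y + (i : ℚ))) := by
  obtain ⟨n, rfl⟩ : ∃ n, c = n + 1 := ⟨c - 1, by omega⟩
  intro x y
  have lhs := Polynomial.ascPochhammer_eval_add_natCast_add_one n 0 (x - y)
  rw [Nat.add_sub_cancel]
  simp only [Nat.cast_zero, add_zero, zero_add] at lhs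
  rw [← lhs, Polynomial.ascPochhammer_eval_sub_add_one]
  refine sum_congr rfl fun k hk => ?_
  rw [Polynomial.ascPochhammer_eval_add_natCast_add_one,
    Polynomial.ascPochhammer_eval_eq_prod_range,
    Nat.add_sub_cancel' (Nat.lt_succ_iff.mp (mem_range.mp hk))]
end

section
/- For m > 1 and an integer-valued polynomial T of degree ≤ Δ, with α ∈ ℤ, writing T(x) = T(−α) + (x+α)Q(x): A/(x+α)^m · T(x) = A·T(−α)/(x+α)^m + A·Q(x)/(x+α)^{m−1}, and if D_Δ^{M−m} A ∈ ℤ then D_Δ^{M−m}(A·T(−α)) ∈ ℤ and D_Δ^{M−(m−1)}·(A/D_Δ) ∈ ℤ with D_Δ·Q integer-valued. -/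
/-!
Evaluating `T = T(−α) + (X + α)Q` and dividing by `(x + α)^m` gives the identity. For the
integrality of `D_Δ·Q`, Newton's formula `T(b + s) − T(b) = Σ_{k ≥ 1} C(s, k) Δᵏ T(b)` has
integer differences `Δᵏ T(b)` that vanish for `k > Δ`, while `s ∣ k·C(s, k)` and `k ∣ D_Δ`
for `k ≤ Δ`; hence `n + α ∣ D_Δ (T(n) − T(−α)) = (n + α) D_Δ Q(n)` for `n ≠ −α`. At `n = −α`,
the vanishing of a high forward difference of `D_Δ Q` writes `D_Δ Q(−α)` as an integer
combination of the values `D_Δ Q(−α + k)`, `k ≥ 1`.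
-/

open Finset Polynomial fwdDiff

lemma Dlcm_ne_zero (Δ : ℕ) : Dlcm Δ ≠ 0 := by
  simp [Dlcm, Finset.lcm_eq_zero_iff]

section fwdDiff

variable {M G : Type*} [AddCommMonoid M] [AddCommGroup G]

lemma AddMonoidHom.fwdDiff_iter_comp {G' : Type*} [AddCommGroup G'] (φ : G →+ G') (h : M)
    (f : M → G) (n : ℕ) (y : M) : Δ_[h] ^[n] (φ ∘ f) y = φ (Δ_[h] ^[n] f y) := by
  simp [fwdDiff_iter_eq_sum_shift]

lemma fwdDiff_iter_comp_intCast {R : Type*} [Ring R] (f : R → G) (n : ℕ) (y : ℤ) :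
    Δ_[1] ^[n] (fun k : ℤ ↦ f k) y = Δ_[1] ^[n] f y := by
  simp [fwdDiff_iter_eq_sum_shift]

lemma mem_of_fwdDiff_iter_eq_zero {S : AddSubgroup G} {h : M} {f : M → G} {n : ℕ} {y : M}
    (hf : Δ_[h] ^[n] f y = 0) (hS : ∀ k ∈ Icc 1 n, f (y + k • h) ∈ S) : f y ∈ S := by
  have hsign : ((-1 : ℤ) ^ n) • f y ∈ S := by
    rw [fwdDiff_iter_eq_sum_shift, sum_range_succ'] at hf
    simp only [zero_smul, add_zero, Nat.choose_zero_right, Nat.sub_zero, Nat.cast_one,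
      mul_one] at hf
    rw [eq_neg_of_add_eq_zero_right hf]
    refine neg_mem (sum_mem fun k hk ↦ zsmul_mem (hS (k + 1) ?_) _)
    simp only [mem_range] at hk
    simp only [mem_Icc]
    omega
  simpa [smul_smul, ← mul_pow] using zsmul_mem hsign ((-1) ^ n)

end fwdDiff

lemma Polynomial.fwdDiff_iter_eval_intCast_eq_zero {R : Type*} [CommRing R] {P : R[X]} {n : ℕ}
    (hP : P.natDegree < n) : Δ_[1] ^[n] (fun k : ℤ ↦ P.eval (k : R)) = 0 := by
  ext y
  exact (fwdDiff_iter_comp_intCast P.eval n y).trans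
    (congrFun (P.fwdDiff_iter_eq_zero_of_degree_lt hP) y)

lemma Nat.dvd_mul_choose (s : ℕ) {k : ℕ} (hk : k ≠ 0) : s ∣ k * s.choose k := by
  obtain ⟨k, rfl⟩ := Nat.exists_eq_succ_of_ne_zero hk
  rcases s with _ | s
  · simp
  · exact ⟨_, by rw [mul_comm, ← Nat.add_one_mul_choose_eq]⟩

lemma dvd_mul_sub_of_fwdDiff_iter_eq_zero {g : ℤ → ℤ} {d D : ℕ}
    (hg : ∀ k, d < k → Δ_[1] ^[k] g = 0) (hD : ∀ k ∈ Icc 1 d, k ∣ D) (a b : ℤ) :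
    a - b ∣ D * (g a - g b) := by
  wlog hab : b ≤ a generalizing a b
  · have := this b a (by omega)
    rwa [← neg_sub a b, neg_dvd, ← neg_sub (g a), mul_neg, dvd_neg] at this
  obtain ⟨s, hs⟩ := Int.eq_ofNat_of_zero_le (sub_nonneg.2 hab)
  obtain rfl : a = b + s := by omega
  have newton := shift_eq_sum_fwdDiff_iter 1 g s b
  rw [sum_range_succ'] at newton
  simp only [nsmul_eq_mul, mul_one, Nat.choose_zero_right, Nat.cast_one, one_mul,
    Function.iterate_zero, id_eq] at newton
  rw [add_sub_cancel_left, newton, add_sub_cancel_right, mul_sum]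
  refine dvd_sum fun k _ ↦ ?_
  rcases le_or_gt (k + 1) d with hk | hk
  · have hdvd : s ∣ D * s.choose (k + 1) := (Nat.dvd_mul_choose s k.succ_ne_zero).trans
      (Nat.mul_dvd_mul_right (hD (k + 1) (by simp [hk])) _)
    rw [← mul_assoc]
    exact (Int.natCast_dvd_natCast.2 hdvd).mul_right _ |>.trans (by push_cast; rfl)
  · simp [hg (k + 1) hk]

lemma exists_int_mul_eval_of_eq_add_mul {T Q : ℚ[X]} {a : ℤ} {d D : ℕ}
    (hT : ∀ n : ℤ, ∃ z : ℤ, T.eval (n : ℚ) = z) (hdeg : T.natDegree ≤ d)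
    (hD : ∀ k ∈ Icc 1 d, k ∣ D) (hQ : ∀ x, T.eval x = T.eval (a : ℚ) + (x - a) * Q.eval x)
    (n : ℤ) : ∃ z : ℤ, (D : ℚ) * Q.eval (n : ℚ) = z := by
  choose g hg using hT
  have hgΔ : ∀ k, d < k → Δ_[1] ^[k] g = 0 := fun k hk ↦ by
    ext y
    have h := congrFun (fwdDiff_iter_eval_intCast_eq_zero (hdeg.trans_lt hk)) y
    rw [show (fun k : ℤ ↦ T.eval (k : ℚ)) = Int.castAddHom ℚ ∘ g from funext hg,
      AddMonoidHom.fwdDiff_iter_comp, Int.coe_castAddHom, Pi.zero_apply] at h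
    exact Int.cast_eq_zero.mp h
  have hoff : ∀ n : ℤ, n ≠ a → ∃ z : ℤ, (D : ℚ) * Q.eval (n : ℚ) = z := by
    intro n hn
    obtain ⟨z, hz⟩ := dvd_mul_sub_of_fwdDiff_iter_eq_zero hgΔ hD n a
    have hna : (n : ℚ) - a ≠ 0 := sub_ne_zero.2 (Int.cast_injective.ne hn)
    refine ⟨z, mul_left_cancel₀ hna ?_⟩
    have hz' : ((D * (g n - g a) : ℤ) : ℚ) = ((n - a) * z : ℤ) := congrArg _ hz
    push_cast at hz'
    rw [← hg, ← hg] at hz'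
    linear_combination hz' - D * hQ n
  rcases eq_or_ne n a with rfl | hn
  · have hS := mem_of_fwdDiff_iter_eq_zero (S := (Int.castAddHom ℚ).range) (h := 1) (y := n)
      (f := fun k : ℤ ↦ (C (D : ℚ) * Q).eval (k : ℚ)) (n := (C (D : ℚ) * Q).natDegree + 1)
      (congrFun (fwdDiff_iter_eval_intCast_eq_zero (Nat.lt_succ_self _)) n) (fun k hk ↦ ?_)
    · obtain ⟨z, hz⟩ := hS
      exact ⟨z, by simpa using hz.symm⟩
    · obtain ⟨z, hz⟩ := hoff (n + k • 1) (by simp at hk ⊢; omega)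
      exact ⟨z, by simpa using hz.symm⟩
  · exact hoff n hn

theorem deltaNormal_inductive_step_general
    (Δ : ℕ) (A : ℚ) (α : ℤ) (m M : ℕ) (hm : 1 < m) (hmM : m ≤ M)
    (T Q : Polynomial ℚ)
    (hT : ∀ n : ℤ, ∃ z : ℤ, T.eval (n : ℚ) = z) (hdeg : T.natDegree ≤ Δ)
    (hQ : T = Polynomial.C (T.eval ((-α : ℤ) : ℚ)) +
      (Polynomial.X + Polynomial.C ((α : ℚ))) * Q)
    (hA : ∃ z : ℤ, ((Dlcm Δ : ℚ) ^ (M - m)) * A = z) :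
    (∀ x : ℚ, x + (α : ℚ) ≠ 0 →
      A / (x + (α : ℚ)) ^ m * T.eval x =
        A * T.eval ((-α : ℤ) : ℚ) / (x + (α : ℚ)) ^ m +
          A * Q.eval x / (x + (α : ℚ)) ^ (m - 1)) ∧
    (∃ z : ℤ, ((Dlcm Δ : ℚ) ^ (M - m)) * (A * T.eval ((-α : ℤ) : ℚ)) = z) ∧
    (∃ z : ℤ, ((Dlcm Δ : ℚ) ^ (M - (m - 1))) * (A / (Dlcm Δ : ℚ)) = z) ∧
    (∀ n : ℤ, ∃ z : ℤ, (Dlcm Δ : ℚ) * Q.eval (n : ℚ) = z) := by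
  have hTeval (x : ℚ) : T.eval x = T.eval ((-α : ℤ) : ℚ) + (x - (-α : ℤ)) * Q.eval x := by
    conv_lhs => rw [hQ]
    simp
  obtain ⟨z, hz⟩ := hA
  obtain ⟨t, ht⟩ := hT (-α)
  refine ⟨fun x hx ↦ ?_, ⟨z * t, ?_⟩, ⟨z, ?_⟩,
    exists_int_mul_eval_of_eq_add_mul hT hdeg (fun k hk ↦ Finset.dvd_lcm hk) hTeval⟩
  · rw [hTeval x, show m = m - 1 + 1 by omega, pow_succ, Nat.add_sub_cancel]
    push_cast
    field_simp
    ring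
  · rw [ht, ← mul_assoc, hz]
    push_cast
    ring
  · rw [show M - (m - 1) = M - m + 1 by omega, pow_succ, ← hz]
    field_simp [Dlcm_ne_zero]

/-- Inductive step of the `Δ`-normality lemma: with `T(x) = T(−α) + (x+α)Q(x)`,
`A/(x+α)^m · T(x) = A·T(−α)/(x+α)^m + A·Q(x)/(x+α)^{m−1}`, and if
`D_Δ^{M−m} A ∈ ℤ` then `D_Δ^{M−m}(A·T(−α)) ∈ ℤ`, `D_Δ^{M−(m−1)}·(A/D_Δ) ∈ ℤ`,
and `D_Δ·Q` is integer-valued. -/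
theorem deltaNormal_inductive_step
    (Δ : ℕ) (hΔ : 1 ≤ Δ) (A : ℚ) (α : ℤ) (m M : ℕ) (hm : 1 < m) (hmM : m ≤ M)
    (T Q : Polynomial ℚ)
    (hT : ∀ n : ℤ, ∃ z : ℤ, T.eval (n : ℚ) = z) (hdeg : T.natDegree ≤ Δ)
    (hQ : T = Polynomial.C (T.eval ((-α : ℤ) : ℚ)) +
      (Polynomial.X + Polynomial.C ((α : ℚ))) * Q)
    (hA : ∃ z : ℤ, ((Dlcm Δ : ℚ) ^ (M - m)) * A = z) :
    (∀ x : ℚ, x + (α : ℚ) ≠ 0 →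
      A / (x + (α : ℚ)) ^ m * T.eval x =
        A * T.eval ((-α : ℤ) : ℚ) / (x + (α : ℚ)) ^ m +
          A * Q.eval x / (x + (α : ℚ)) ^ (m - 1)) ∧
    (∃ z : ℤ, ((Dlcm Δ : ℚ) ^ (M - m)) * (A * T.eval ((-α : ℤ) : ℚ)) = z) ∧
    (∃ z : ℤ, ((Dlcm Δ : ℚ) ^ (M - (m - 1))) * (A / (Dlcm Δ : ℚ)) = z) ∧
    (∀ n : ℤ, ∃ z : ℤ, (Dlcm Δ : ℚ) * Q.eval (n : ℚ) = z) :=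
  deltaNormal_inductive_step_general Δ A α m M hm hmM T Q hT hdeg hQ hA
end
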